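/- Properties of the spinor-to-2-form map: for every ξ ∈ ℂ², the matrix F(ξ) is antisymmetric and satisfies ★F(ξ) = −i F(ξ) and det F(ξ) = 0; moreover F(ξ) = 0 if and only if ξ = 0; and for ξ = (1, 0) one has F(ξ) = l∧m, i.e. F(ξ)_{jk} = l_j m_k − l_k m_j where l := (1,0,0,1) and m := (0,1,i,0). -/

import Mathlib

noncomputable section

open scoped Matrix

/-- Totally antisymmetric symbol, ε_{0123} = 1. -/
def eps (a b c d : Fin 4) : ℝ :=
  ∑ σ : Equiv.Perm (Fin 4),
    if σ 0 = a ∧ σ 1 = b ∧ σ 2 = c ∧ σ 3 = d then ((Equiv.Perm.sign σ : ℤ) : ℝ) else 0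

/-- η := diag(1,−1,−1,−1). -/
def ηM : Matrix (Fin 4) (Fin 4) ℝ :=
  !![1, 0, 0, 0; 0, -1, 0, 0; 0, 0, -1, 0; 0, 0, 0, -1]

/-- Pauli matrices s₀, s₁, s₂, s₃. -/
def sP : Fin 4 → Matrix (Fin 2) (Fin 2) ℂ :=
  ![!![1, 0; 0, 1], !![0, 1; 1, 0], !![0, Complex.I; -Complex.I, 0], !![1, 0; 0, -1]]

/-- The matrix E. -/
def EM : Matrix (Fin 2) (Fin 2) ℂ := !![0, 1; -1, 0]

/-- Second-order Pauli matrices σ_{jk} := (1/2)(s_j E s_kᵀ − s_k E s_jᵀ). -/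
def sig2 (j k : Fin 4) : Matrix (Fin 2) (Fin 2) ℂ :=
  (1/2 : ℂ) • (sP j * EM * (sP k)ᵀ - sP k * EM * (sP j)ᵀ)

/-- The spinor-to-2-form map F(ξ)_{jk} := σ_{jk ab} ξ^a ξ^b. -/
def Fspin (ξ : Fin 2 → ℂ) : Matrix (Fin 4) (Fin 4) ℂ :=
  Matrix.of fun j k => ∑ a : Fin 2, ∑ b : Fin 2, sig2 j k a b * ξ a * ξ b

/-- Minkowski Hodge star of an antisymmetric complex 4×4 matrix:
(★F)_{γδ} := (1/2) η^{αμ} η^{βν} F_{μν} ε_{αβγδ}. -/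
def hodge2 (F : Matrix (Fin 4) (Fin 4) ℂ) : Matrix (Fin 4) (Fin 4) ℂ :=
  Matrix.of fun γ δ => (1/2 : ℂ) *
    ∑ α : Fin 4, ∑ β : Fin 4, ∑ μ : Fin 4, ∑ ν : Fin 4,
      (ηM α μ : ℂ) * (ηM β ν : ℂ) * F μ ν * (eps α β γ δ : ℂ)

/-- l := (1,0,0,1). -/
def lV : Fin 4 → ℂ := ![1, 0, 0, 1]

/-- m := (0,1,i,0). -/
def mV : Fin 4 → ℂ := ![0, 1, Complex.I, 0]


/-! With `ω(u, v) := uᵀ E v` the symplectic form on `ℂ²`, one has `F(ξ)_{jk} = ω(s_jᵀ ξ, s_kᵀ ξ)`,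
so `F(ξ)` is antisymmetric with entries quadratic in `ξ`, namely `±(ξ₀² - ξ₁²)`, `±(ξ₀² + ξ₁²)`
and `±2ξ₀ξ₁`, up to factors `i`. On antisymmetric `4 × 4` matrices the Hodge star just permutes
the six independent entries with signs, which makes `★F(ξ) = -i F(ξ)` a direct check, and the
determinant is the square of the Pfaffian, which vanishes on `F(ξ)` because
`(ξ₀² + ξ₁²)² - (ξ₀² - ξ₁²)² = (2ξ₀ξ₁)²`. -/

open Matrix

theorem eps_eq_sign_prod_sub (a b c d : Fin 4) :
    eps a b c d = Int.sign (((b : ℤ) - a) * ((c : ℤ) - a) * ((d : ℤ) - a) *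
      ((c : ℤ) - b) * ((d : ℤ) - b) * ((d : ℤ) - c)) := by
  have int_version : ∀ a b c d : Fin 4,
      (∑ σ : Equiv.Perm (Fin 4),
        if σ 0 = a ∧ σ 1 = b ∧ σ 2 = c ∧ σ 3 = d then (Equiv.Perm.sign σ : ℤ) else 0) =
      Int.sign (((b : ℤ) - a) * ((c : ℤ) - a) * ((d : ℤ) - a) *
        ((c : ℤ) - b) * ((d : ℤ) - b) * ((d : ℤ) - c)) := by decide
  rw [← int_version, eps, Int.cast_sum]
  exact Finset.sum_congr rfl fun σ _ => by split_ifs <;> simp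

section Skew4

variable {R : Type*}

def skew4 [Ring R] (a b c d e f : R) : Matrix (Fin 4) (Fin 4) R :=
  !![0, a, b, c; -a, 0, d, e; -b, -d, 0, f; -c, -e, -f, 0]

theorem smul_skew4 [Ring R] (r a b c d e f : R) :
    r • skew4 a b c d e f = skew4 (r * a) (r * b) (r * c) (r * d) (r * e) (r * f) := by
  ext i j
  fin_cases i <;> fin_cases j <;> simp [skew4]

theorem det_skew4 [CommRing R] (a b c d e f : R) :
    (skew4 a b c d e f).det = (a * f - b * e + c * d) ^ 2 := by
  rw [det_succ_row_zero]
  simp [skew4, Fin.sum_univ_succ, det_fin_three, Fin.succAbove]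
  ring

end Skew4

theorem ηM_apply (α μ : Fin 4) :
    (ηM α μ : ℂ) = if α = μ then ![1, -1, -1, -1] α else 0 := by
  fin_cases α <;> fin_cases μ <;> simp [ηM]

theorem hodge2_apply (F : Matrix (Fin 4) (Fin 4) ℂ) (γ δ : Fin 4) :
    hodge2 F γ δ = (1 / 2 : ℂ) * ∑ α : Fin 4, ∑ β : Fin 4,
      (![1, -1, -1, -1] α * ![1, -1, -1, -1] β : ℂ) * F α β * (eps α β γ δ : ℂ) := by
  simp [hodge2, ηM_apply, ite_mul, Finset.sum_ite_eq]

theorem hodge2_skew4 (a b c d e f : ℂ) :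
    hodge2 (skew4 a b c d e f) = skew4 f (-e) d (-c) b (-a) := by
  ext γ δ
  fin_cases γ <;> fin_cases δ <;>
    simp [hodge2_apply, skew4, eps_eq_sign_prod_sub, Fin.sum_univ_four, Int.sign_eq_one_of_pos] <;>
    ring

theorem dotProduct_EM_mulVec_comm (u v : Fin 2 → ℂ) :
    u ⬝ᵥ (EM *ᵥ v) = -(v ⬝ᵥ (EM *ᵥ u)) := by
  simp [EM, dotProduct, mulVec, Fin.sum_univ_two]
  ring

theorem dotProduct_mul_EM_mul_transpose_mulVec (A B : Matrix (Fin 2) (Fin 2) ℂ) (ξ : Fin 2 → ℂ) :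
    ξ ⬝ᵥ ((A * EM * Bᵀ) *ᵥ ξ) = (Aᵀ *ᵥ ξ) ⬝ᵥ (EM *ᵥ (Bᵀ *ᵥ ξ)) := by
  rw [← mulVec_mulVec, ← mulVec_mulVec, dotProduct_mulVec, ← mulVec_transpose]

theorem Fspin_apply (ξ : Fin 2 → ℂ) (j k : Fin 4) :
    Fspin ξ j k = ((sP j)ᵀ *ᵥ ξ) ⬝ᵥ (EM *ᵥ ((sP k)ᵀ *ᵥ ξ)) := by
  have quadratic_form : Fspin ξ j k = ξ ⬝ᵥ (sig2 j k *ᵥ ξ) := by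
    simp only [Fspin, of_apply, dotProduct, mulVec, Finset.mul_sum]
    exact Finset.sum_congr rfl fun a _ => Finset.sum_congr rfl fun b _ => by ring
  rw [quadratic_form, sig2, smul_mulVec, sub_mulVec, dotProduct_smul, dotProduct_sub,
    dotProduct_mul_EM_mul_transpose_mulVec, dotProduct_mul_EM_mul_transpose_mulVec,
    dotProduct_EM_mulVec_comm ((sP k)ᵀ *ᵥ ξ), smul_eq_mul]
  ring

theorem Fspin_transpose (ξ : Fin 2 → ℂ) : (Fspin ξ)ᵀ = -Fspin ξ := by
  ext j k
  rw [transpose_apply, neg_apply, Fspin_apply, Fspin_apply, dotProduct_EM_mulVec_comm]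

open Complex in
theorem Fspin_eq_skew4 (ξ : Fin 2 → ℂ) :
    Fspin ξ = skew4 (ξ 0 ^ 2 - ξ 1 ^ 2) (I * (ξ 0 ^ 2 + ξ 1 ^ 2)) (-(2 * ξ 0 * ξ 1))
      (2 * I * ξ 0 * ξ 1) (-(ξ 0 ^ 2 + ξ 1 ^ 2)) (-(I * (ξ 0 ^ 2 - ξ 1 ^ 2))) := by
  ext j k
  fin_cases j <;> fin_cases k <;>
    simp [Fspin_apply, sP, EM, skew4, dotProduct, mulVec, Fin.sum_univ_two] <;> ring_nf

theorem hodge2_Fspin (ξ : Fin 2 → ℂ) : hodge2 (Fspin ξ) = (-Complex.I) • Fspin ξ := by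
  rw [Fspin_eq_skew4, hodge2_skew4, smul_skew4]
  congr 1 <;> ring_nf <;> simp [Complex.I_sq]

theorem det_Fspin (ξ : Fin 2 → ℂ) : (Fspin ξ).det = 0 := by
  rw [Fspin_eq_skew4, det_skew4]
  ring

theorem Fspin_eq_zero_iff (ξ : Fin 2 → ℂ) : Fspin ξ = 0 ↔ ξ = 0 := by
  refine ⟨fun h => ?_, by rintro rfl; ext; simp [Fspin]⟩
  have h₀₁ : ξ 0 ^ 2 - ξ 1 ^ 2 = 0 := by
    simpa [Fspin_eq_skew4, skew4] using congrFun (congrFun h 0) 1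
  have h₁₃ : -(ξ 0 ^ 2 + ξ 1 ^ 2) = 0 := by
    simpa [Fspin_eq_skew4, skew4] using congrFun (congrFun h 1) 3
  have hξ₀ : ξ 0 ^ 2 = 0 := by linear_combination (h₀₁ - h₁₃) / 2
  have hξ₁ : ξ 1 ^ 2 = 0 := by linear_combination -(h₀₁ + h₁₃) / 2
  ext i
  fin_cases i
  exacts [pow_eq_zero_iff two_ne_zero |>.mp hξ₀, pow_eq_zero_iff two_ne_zero |>.mp hξ₁]

theorem Fspin_one_zero : Fspin ![1, 0] = of fun j k => lV j * mV k - lV k * mV j := by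
  ext j k
  fin_cases j <;> fin_cases k <;>
    simp [Fspin_apply, sP, EM, lV, mV, dotProduct, mulVec, Fin.sum_univ_two]

/-- Properties of the spinor-to-2-form map: F(ξ) is antisymmetric, ★F(ξ) = −iF(ξ),
det F(ξ) = 0, F(ξ) = 0 iff ξ = 0, and F((1,0)) = l∧m. -/
theorem Fspin_properties :
    (∀ ξ : Fin 2 → ℂ,
      (Fspin ξ)ᵀ = -Fspin ξ ∧
      hodge2 (Fspin ξ) = (-Complex.I) • Fspin ξ ∧
      (Fspin ξ).det = 0 ∧
      (Fspin ξ = 0 ↔ ξ = 0)) ∧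
    Fspin ![1, 0] = Matrix.of fun j k => lV j * mV k - lV k * mV j := by
  exact ⟨fun ξ => ⟨Fspin_transpose ξ, hodge2_Fspin ξ, det_Fspin ξ, Fspin_eq_zero_iff ξ⟩,
    Fspin_one_zero⟩
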